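/- For any integer v with 0 ≤ v ≤ f−1, the value H_v^{(p)}(β) lies in the prime subfield {0,1} of K if and only if 2 ∈ D_0^{(p)}. -/

import Mathlib

open Finset Polynomial

/-- Generalized cyclotomic class `D_i^{(p)} = {g^(f·t+i) mod p : 0 ≤ t < e}`. -/
def Dp (p e f g i : ℕ) : Finset ℕ :=
  (Finset.range e).image fun t => g ^ (f * t + i) % p

/-- Generalized cyclotomic class `D_i^{(p²)} = {g^(p·f·t+i) mod p² : 0 ≤ t < e}`. -/
def Dp2 (p e f g i : ℕ) : Finset ℕ :=
  (Finset.range e).image fun t => g ^ (p * f * t + i) % p ^ 2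

/-- `p·D_i^{(p)} = {p·x mod p² : x ∈ D_i^{(p)}} ⊆ Z_{p²}`. -/
def pDp (p e f g i : ℕ) : Finset ℕ :=
  (Dp p e f g i).image fun x => p * x % p ^ 2

/-- `H_b^{(p)} = ⋃_{i=0}^{f/2-1} p·D_{(i+b) mod f}^{(p)}`. -/
def Hp (p e f g b : ℕ) : Finset ℕ :=
  (Finset.range (f / 2)).biUnion fun i => pDp p e f g ((i + b) % f)

/-- `H_b^{(p²)} = ⋃_{i=0}^{pf/2-1} D_{(i+b) mod pf}^{(p²)}`. -/
def Hp2 (p e f g b : ℕ) : Finset ℕ :=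
  (Finset.range (p * f / 2)).biUnion fun i => Dp2 p e f g ((i + b) % (p * f))

/-- The characteristic set `C₁ = H_b^{(p)} ∪ H_b^{(p²)} ∪ {0}`. -/
def C1 (p e f g b : ℕ) : Finset ℕ :=
  Hp p e f g b ∪ Hp2 p e f g b ∪ {0}

/-!
Put `γ = β ^ p`, a primitive `p`-th root of unity, and write `2 ≡ g ^ k (mod p)`. Then
`H_v^{(p)}(β) = T v`, the sum of `γ ^ x` over the `f / 2` consecutive classes `D_v, …, D_{v+f/2-1}`.
In characteristic `2` squaring doubles the exponents, which shifts the classes by `k`: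
`T v ^ 2 = T (v + k)`. The two halves together cover `0 < x < p`, so `T v + T (v + f/2) = -1 = 1`.
If `f ∣ k` (i.e. `2 ∈ D_0`), `T v` is idempotent, hence `0` or `1`. Otherwise, `f` being a power of
`2`, some multiple of `k` is `≡ f / 2 (mod f)`; idempotence of `T v` would then give
`T v = T (v + f / 2)`, hence `1 = 2 T v = 0`.
-/

open Function

section Periodic

variable {M : Type*}

theorem Function.Periodic.sum_range_add [AddCommGroup M] {ψ : ℕ → M} {n : ℕ} (h : Periodic ψ n)
    (c : ℕ) : ∑ t ∈ range n, ψ (t + c) = ∑ t ∈ range n, ψ t := by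
  induction c with
  | zero => rfl
  | succ c ih =>
    have hshift := sum_range_succ' (fun t => ψ (t + c)) n
    rw [sum_range_succ, zero_add, add_comm n c, h c] at hshift
    calc ∑ t ∈ range n, ψ (t + (c + 1)) = ∑ t ∈ range n, ψ (t + 1 + c) :=
          sum_congr rfl fun t _ => by rw [add_comm c 1, add_assoc]
      _ = ∑ t ∈ range n, ψ (t + c) := add_right_cancel hshift.symm
      _ = ∑ t ∈ range n, ψ t := ih

theorem sum_range_mul_eq_sum_sum [AddCommMonoid M] (ψ : ℕ → M) (e f : ℕ) :
    ∑ n ∈ range (e * f), ψ n = ∑ i ∈ range f, ∑ t ∈ range e, ψ (f * t + i) := by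
  rw [sum_comm]
  induction e with
  | zero => simp
  | succ e ih => rw [Nat.succ_mul, sum_range_add, ih, sum_range_succ, mul_comm f e]

theorem Function.Periodic.sum_range_mul_add_mod [AddCommGroup M] {χ : ℕ → M} {e f : ℕ}
    (h : Periodic χ (e * f)) (c : ℕ) :
    ∑ t ∈ range e, χ (f * t + c % f) = ∑ t ∈ range e, χ (f * t + c) := by
  have hψ : Periodic (fun t => χ (f * t + c % f)) e := fun t => by
    simp only [mul_add, mul_comm f e, add_right_comm _ (e * f), h _]
  rw [← hψ.sum_range_add (c / f)]
  exact sum_congr rfl fun t _ => by rw [mul_add, add_assoc, Nat.div_add_mod]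

end Periodic

theorem exists_mul_modEq_two_pow {r k : ℕ} (hk : ¬ 2 ^ (r + 1) ∣ k) :
    ∃ j, j * k ≡ 2 ^ r [MOD 2 ^ (r + 1)] := by
  obtain ⟨s, hs, hd⟩ := (Nat.dvd_prime_pow Nat.prime_two).1 (Nat.gcd_dvd_right k (2 ^ (r + 1)))
  have hsr : s ≤ r := by
    rcases hs.lt_or_eq with hs | rfl
    · omega
    · exact absurd (hd ▸ Nat.gcd_dvd_left k _) hk
  have hlt : k.gcd (2 ^ (r + 1)) < 2 ^ (r + 1) := by
    rw [hd]; exact Nat.pow_lt_pow_right one_lt_two (by omega)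
  obtain ⟨m, -, hm⟩ := Nat.exists_mul_mod_eq_gcd hlt
  refine ⟨m * 2 ^ (r - s), ?_⟩
  calc m * 2 ^ (r - s) * k = k * m * 2 ^ (r - s) := by ring
    _ ≡ 2 ^ s * 2 ^ (r - s) [MOD 2 ^ (r + 1)] :=
      Nat.ModEq.mul_right _ (hm.trans (by rw [Nat.mod_eq_of_lt (hd ▸ hlt), hd]))
    _ = 2 ^ r := by rw [← pow_add, Nat.add_sub_cancel' hsr]

theorem mem_zero_one_iff_two_pow_dvd {R : Type*} [CommRing R] [IsDomain R] [CharP R 2]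
    {T : ℕ → R} {r k : ℕ} (hT : Periodic T (2 ^ (r + 1))) (hsq : ∀ v, T v ^ 2 = T (v + k))
    (hhalf : ∀ v, T v + T (v + 2 ^ r) = 1) (v : ℕ) :
    T v ∈ ({0, 1} : Set R) ↔ 2 ^ (r + 1) ∣ k := by
  have hidem : T v ∈ ({0, 1} : Set R) ↔ T v ^ 2 = T v := by
    rw [sq]; exact IsIdempotentElem.iff_eq_zero_or_one.symm
  rw [hidem, hsq]
  constructor
  · intro hfix
    by_contra hk
    obtain ⟨j, hj⟩ := exists_mul_modEq_two_pow hk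
    have hiter : ∀ j, T (v + j * k) = T v := by
      intro j
      induction j with
      | zero => simp
      | succ j ih => rw [add_mul, one_mul, ← add_assoc, ← hsq, ih, hsq, hfix]
    have hhalf_v := hhalf v
    rw [← hT.map_mod_nat (v + 2 ^ r), ← Nat.ModEq.add_left v hj, hT.map_mod_nat, hiter,
      CharTwo.add_self_eq_zero] at hhalf_v
    exact zero_ne_one hhalf_v
  · rintro ⟨q, rfl⟩
    simpa [mul_comm] using hT.nat_mul q v

/-- For `χ n = (β ^ p) ^ g ^ n` this is `H_v^{(p)}(β)`: the inner sum runs over `D_{i+v}^{(p)}`. -/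
def classHalfSum {R : Type*} [AddCommMonoid R] (χ : ℕ → R) (e f v : ℕ) : R :=
  ∑ i ∈ range (f / 2), ∑ t ∈ range e, χ (f * t + (i + v))

section ClassHalfSum

variable {R : Type*} [CommRing R] {χ : ℕ → R} {e f : ℕ}

theorem periodic_classHalfSum (hχ : Periodic χ (e * f)) : Periodic (classHalfSum χ e f) f := by
  intro v
  refine sum_congr rfl fun i _ => ?_
  rw [← hχ.sum_range_mul_add_mod, ← add_assoc, Nat.add_mod_right, hχ.sum_range_mul_add_mod]

theorem classHalfSum_sq [CharP R 2] {k : ℕ} (hχ : ∀ n, χ n ^ 2 = χ (n + k)) (v : ℕ) :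
    classHalfSum χ e f v ^ 2 = classHalfSum χ e f (v + k) := by
  simp only [classHalfSum, sum_pow_char, hχ, add_assoc]

theorem classHalfSum_add_classHalfSum_add_half (hχ : Periodic χ (e * f)) (hf : 2 ∣ f) (v : ℕ) :
    classHalfSum χ e f v + classHalfSum χ e f (v + f / 2) = ∑ n ∈ range (e * f), χ n := by
  have hsplit := sum_range_add (fun i => ∑ t ∈ range e, χ (f * t + (i + v))) (f / 2) (f / 2)
  rw [← two_mul, Nat.mul_div_cancel' hf] at hsplit
  calc classHalfSum χ e f v + classHalfSum χ e f (v + f / 2)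
      = ∑ i ∈ range f, ∑ t ∈ range e, χ (f * t + (i + v)) := by
        rw [hsplit, classHalfSum, classHalfSum]
        congr 1
        exact sum_congr rfl fun i _ => sum_congr rfl fun t _ => by ring_nf
    _ = ∑ n ∈ range (e * f), χ (n + v) := by
        rw [sum_range_mul_eq_sum_sum]
        simp only [add_assoc]
    _ = ∑ n ∈ range (e * f), χ n := hχ.sum_range_add v

end ClassHalfSum

theorem orderOf_natCast_zmod_eq_of_orderOf_natCast_sq {p g : ℕ} (hp : p.Prime)
    (hg : orderOf (g : ZMod (p ^ 2)) = p * (p - 1)) : orderOf (g : ZMod p) = p - 1 := by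
  have := Fact.mk hp
  have hg1 : (g : ZMod p) ^ (p * (p - 1)) = 1 := by
    have h := congrArg (ZMod.castHom (dvd_pow_self p two_ne_zero) (ZMod p))
      (pow_orderOf_eq_one (g : ZMod (p ^ 2)))
    rwa [map_pow, map_natCast, map_one, hg] at h
  have hg0 : (g : ZMod p) ≠ 0 := by
    rintro hg0
    simp [hg0, hp.ne_zero, (Nat.sub_pos_of_lt hp.one_lt).ne'] at hg1
  refine Nat.dvd_antisymm (orderOf_dvd_of_pow_eq_one (ZMod.pow_card_sub_one_eq_one hg0)) ?_
  set d := orderOf (g : ZMod p)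
  -- `g ^ d ≡ 1 [p]` lifts to `g ^ (d p) ≡ 1 [p²]`
  have hdp : (p : ℤ) ∣ (g : ℤ) ^ d - 1 := by
    rw [← ZMod.intCast_zmod_eq_zero_iff_dvd]
    simp [d, pow_orderOf_eq_one]
  have hdp2 : (g : ZMod (p ^ 2)) ^ (d * p) = 1 := by
    have h := (ZMod.intCast_zmod_eq_zero_iff_dvd _ (p ^ 2)).2
      (by simpa using dvd_sub_pow_of_dvd_sub hdp 1)
    push_cast at h
    rwa [sub_eq_zero, ← pow_mul] at h
  have hdvd := orderOf_dvd_of_pow_eq_one hdp2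
  rw [hg, mul_comm d p] at hdvd
  exact Nat.dvd_of_mul_dvd_mul_left hp.pos hdvd

section CyclotomicClasses

variable {p e f g : ℕ}

theorem pow_mod_eq_pow_mod_iff {n : ℕ} (hg : orderOf (g : ZMod p) = n) (hn : 0 < n) {a b : ℕ} :
    g ^ a % p = g ^ b % p ↔ a ≡ b [MOD n] := by
  rw [← ZMod.natCast_eq_natCast_iff', Nat.cast_pow, Nat.cast_pow, ← hg]
  exact (orderOf_pos_iff.1 (hg ▸ hn)).pow_eq_pow_iff_modEq

theorem exists_lt_pow_mod_eq [Fact p.Prime] (hg : orderOf (g : ZMod p) = p - 1) {x : ℕ}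
    (hx : x ∈ Ioo 0 p) : ∃ n < p - 1, g ^ n % p = x := by
  obtain ⟨hx0, hxp⟩ := mem_Ioo.1 hx
  have : NeZero (p - 1) := ⟨by omega⟩
  have hx : (x : ZMod p) ≠ 0 := fun h =>
    absurd (Nat.le_of_dvd hx0 ((ZMod.natCast_eq_zero_iff x p).1 h)) (by omega)
  obtain ⟨n, hn, hgn⟩ := (IsPrimitiveRoot.iff_orderOf.2 hg).eq_pow_of_pow_eq_one
    (ZMod.pow_card_sub_one_eq_one hx)
  refine ⟨n, hn, ?_⟩
  rw [← Nat.mod_eq_of_lt hxp, ← ZMod.natCast_eq_natCast_iff', Nat.cast_pow, hgn]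

theorem sum_range_pow_mod_eq_sum_Ioo {M : Type*} [AddCommMonoid M] [Fact p.Prime]
    (hg : orderOf (g : ZMod p) = p - 1) (φ : ℕ → M) :
    ∑ n ∈ range (p - 1), φ (g ^ n % p) = ∑ x ∈ Ioo 0 p, φ x := by
  have hp : p.Prime := Fact.out
  have hp1 : 0 < p - 1 := Nat.sub_pos_of_lt hp.one_lt
  have hg0 : (g : ZMod p) ≠ 0 := (IsPrimitiveRoot.iff_orderOf.2 hg).ne_zero hp1.ne'
  refine sum_nbij (fun n => g ^ n % p) (fun n _ => mem_Ioo.2 ⟨Nat.pos_of_ne_zero fun h0 => ?_,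
    Nat.mod_lt _ hp.pos⟩) (fun m hm n hn h => ?_) (fun x hx => ?_) fun _ _ => rfl
  · apply pow_ne_zero n hg0
    rw [← Nat.cast_pow, ← ZMod.natCast_mod, h0, Nat.cast_zero]
  · exact ((pow_mod_eq_pow_mod_iff hg hp1).1 h).eq_of_lt_of_lt (mem_range.1 hm) (mem_range.1 hn)
  · obtain ⟨n, hn, hgn⟩ := exists_lt_pow_mod_eq hg hx
    exact ⟨n, mem_range.2 hn, hgn⟩

theorem injOn_pow_mod_Dp (hg : orderOf (g : ZMod p) = e * f) (hef : 0 < e * f) (i : ℕ) :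
    Set.InjOn (fun t => g ^ (f * t + i) % p) (range e) := by
  intro t ht u hu htu
  have h := Nat.ModEq.add_right_cancel' i ((pow_mod_eq_pow_mod_iff hg hef).1 htu)
  rw [mul_comm e f] at h
  exact (Nat.ModEq.mul_left_cancel' (right_ne_zero_of_mul hef.ne') h).eq_of_lt_of_lt
    (mem_range.1 ht) (mem_range.1 hu)

theorem disjoint_Dp (hg : orderOf (g : ZMod p) = e * f) (hef : 0 < e * f) {i j : ℕ}
    (hi : i < f) (hj : j < f) (hij : i ≠ j) : Disjoint (Dp p e f g i) (Dp p e f g j) := by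
  simp only [Dp, disjoint_left, mem_image, not_exists, not_and]
  rintro _ ⟨t, -, rfl⟩ u - htu
  have h := ((pow_mod_eq_pow_mod_iff hg hef).1 htu).of_mul_left e
  rw [Nat.ModEq, Nat.mul_add_mod, Nat.mul_add_mod, Nat.mod_eq_of_lt hi, Nat.mod_eq_of_lt hj] at h
  exact hij h.symm

theorem Dp_subset_Iio [NeZero p] (i : ℕ) : (Dp p e f g i : Set ℕ) ⊆ Set.Iio p := by
  simp only [Dp, coe_image, Set.image_subset_iff]
  exact fun t _ => Nat.mod_lt _ (NeZero.pos p)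

theorem two_mem_Dp_zero_iff (hg : orderOf (g : ZMod p) = e * f) (hef : 0 < e * f) {k : ℕ}
    (hk : g ^ k % p = 2) : 2 ∈ Dp p e f g 0 ↔ f ∣ k := by
  simp only [Dp, mem_image, mem_range, add_zero]
  rw [← hk]
  simp_rw [pow_mod_eq_pow_mod_iff hg hef]
  constructor
  · rintro ⟨t, -, ht⟩
    exact Nat.dvd_of_mod_eq_zero (Eq.trans (ht.of_mul_left e).symm (Nat.mul_mod_right f t))
  · rintro ⟨q, rfl⟩
    refine ⟨q % e, Nat.mod_lt _ (Nat.pos_of_mul_pos_right hef), ?_⟩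
    rw [mul_comm e f]
    exact (Nat.mod_modEq q e).mul_left' f

theorem injOn_mul_mod_sq (p : ℕ) : Set.InjOn (fun x => p * x % p ^ 2) (Set.Iio p) := by
  intro x hx y hy hxy
  have hp : 0 < p := (Nat.zero_le x).trans_lt hx
  have hlt : ∀ z < p, p * z < p ^ 2 := fun z hz => sq p ▸ Nat.mul_lt_mul_of_pos_left hz hp
  simp only at hxy
  rwa [Nat.mod_eq_of_lt (hlt x hx), Nat.mod_eq_of_lt (hlt y hy), Nat.mul_right_inj hp.ne'] at hxy

theorem disjoint_pDp [NeZero p] (hg : orderOf (g : ZMod p) = e * f) (hef : 0 < e * f) {i j : ℕ}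
    (hi : i < f) (hj : j < f) (hij : i ≠ j) : Disjoint (pDp p e f g i) (pDp p e f g j) := by
  simp only [pDp, disjoint_left, mem_image, not_exists, not_and]
  rintro _ ⟨x, hx, rfl⟩ y hy hyx
  have hxy := injOn_mul_mod_sq p (Dp_subset_Iio j hy) (Dp_subset_Iio i hx) hyx
  exact disjoint_left.1 (disjoint_Dp hg hef hi hj hij) hx (hxy ▸ hy)

end CyclotomicClasses

section RootsOfUnity

variable {K : Type*} {p e f g : ℕ}

theorem pow_eq_pow_of_natCast_eq [Monoid K] {γ : K} (hγ : γ ^ p = 1) {a b : ℕ}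
    (h : (a : ZMod p) = b) : γ ^ a = γ ^ b := by
  rw [pow_eq_pow_mod a hγ, pow_eq_pow_mod b hγ, (ZMod.natCast_eq_natCast_iff' a b p).1 h]

theorem periodic_pow_pow [Monoid K] {n : ℕ} (hg : orderOf (g : ZMod p) = n) {γ : K}
    (hγ : γ ^ p = 1) : Periodic (fun m => γ ^ g ^ m) n := fun m =>
  pow_eq_pow_of_natCast_eq hγ <| by
    rw [Nat.cast_pow, Nat.cast_pow, pow_add, ← hg, pow_orderOf_eq_one, mul_one]

theorem pow_pow_sq [Monoid K] {k : ℕ} (hk : g ^ k % p = 2) {γ : K} (hγ : γ ^ p = 1) (m : ℕ) :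
    (γ ^ g ^ m) ^ 2 = γ ^ g ^ (m + k) := by
  rw [← pow_mul]
  refine pow_eq_pow_of_natCast_eq hγ ?_
  have hk' : ((g ^ k : ℕ) : ZMod p) = 2 := by rw [← ZMod.natCast_mod, hk, Nat.cast_ofNat]
  push_cast at hk' ⊢
  rw [pow_add, hk']

theorem sum_range_pow_pow_eq_neg_one [CommRing K] [IsDomain K] [Fact p.Prime]
    (hg : orderOf (g : ZMod p) = p - 1) {γ : K} (hγ : IsPrimitiveRoot γ p) :
    ∑ n ∈ range (p - 1), γ ^ g ^ n = -1 := by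
  have hp : 1 < p := (Fact.out : p.Prime).one_lt
  calc ∑ n ∈ range (p - 1), γ ^ g ^ n = ∑ x ∈ Ioo 0 p, γ ^ x := by
        rw [← sum_range_pow_mod_eq_sum_Ioo hg]
        exact sum_congr rfl fun n _ => pow_eq_pow_mod _ hγ.pow_eq_one
    _ = -1 := by
        rw [← Ico_add_one_left_eq_Ioo, zero_add, sum_Ico_eq_sub _ hp.le, hγ.geom_sum_eq_zero hp,
          sum_range_one, pow_zero, zero_sub]

theorem sum_pDp [Semiring K] [NeZero p] (hg : orderOf (g : ZMod p) = e * f) (hef : 0 < e * f)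
    {β : K} (hβ : β ^ p ^ 2 = 1) (i : ℕ) :
    ∑ y ∈ pDp p e f g i, β ^ y = ∑ t ∈ range e, (β ^ p) ^ g ^ (f * t + i) := by
  have hγ : (β ^ p) ^ p = 1 := by rw [← pow_mul, ← sq, hβ]
  rw [pDp, sum_image ((injOn_mul_mod_sq p).mono (Dp_subset_Iio i)), Dp,
    sum_image (injOn_pow_mod_Dp hg hef i)]
  refine sum_congr rfl fun t _ => ?_
  rw [← pow_eq_pow_mod _ hβ, pow_mul, ← pow_eq_pow_mod _ hγ]

theorem sum_Hp_eq_classHalfSum [CommRing K] [NeZero p] (hg : orderOf (g : ZMod p) = e * f)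
    (hef : 0 < e * f) {β : K} (hβ : β ^ p ^ 2 = 1) (v : ℕ) :
    ∑ y ∈ Hp p e f g v, β ^ y = classHalfSum (fun n => (β ^ p) ^ g ^ n) e f v := by
  have hf : 0 < f := Nat.pos_of_mul_pos_left hef
  have hdisj : (range (f / 2) : Set ℕ).PairwiseDisjoint (fun i => pDp p e f g ((i + v) % f)) := by
    intro i hi j hj hij
    refine disjoint_pDp hg hef (Nat.mod_lt _ hf) (Nat.mod_lt _ hf) fun h => hij ?_
    rw [coe_range, Set.mem_Iio] at hi hj
    exact (Nat.ModEq.add_right_cancel' v h).eq_of_lt_of_lt (by omega) (by omega)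
  have hχ := periodic_pow_pow hg (by rw [← pow_mul, ← sq, hβ] : (β ^ p) ^ p = 1)
  rw [Hp, sum_biUnion hdisj]
  exact sum_congr rfl fun i _ => by rw [sum_pDp hg hef hβ, hχ.sum_range_mul_add_mod]

end RootsOfUnity

theorem stmt_12_general (p e f r g : ℕ) (hp : p.Prime)
    (hr : 1 ≤ r) (hf : f = 2 ^ r) (hef : p - 1 = e * f)
    (hg : orderOf (g : ZMod (p ^ 2)) = p * (p - 1))
    {K : Type*} [Field K] (hK : CharP K 2) (β : K) (hβ : orderOf β = p ^ 2)
    (v : ℕ) :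
    (∑ t ∈ Hp p e f g v, β ^ t) ∈ ({0, 1} : Set K) ↔ 2 ∈ Dp p e f g 0 := by
  have := Fact.mk hp
  have hgp := orderOf_natCast_zmod_eq_of_orderOf_natCast_sq hp hg
  have hgef : orderOf (g : ZMod p) = e * f := hgp.trans hef
  have hef0 : 0 < e * f := hef ▸ Nat.sub_pos_of_lt hp.one_lt
  have hp2 : 2 < p := by
    have : 2 ∣ p - 1 := hef ▸ hf ▸ (dvd_pow_self 2 (by omega)).mul_left e
    have := hp.two_le
    omega
  obtain ⟨k, -, hk⟩ := exists_lt_pow_mod_eq hgp (mem_Ioo.2 ⟨two_pos, hp2⟩)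
  have hγ : IsPrimitiveRoot (β ^ p) p :=
    (IsPrimitiveRoot.iff_orderOf.2 hβ).pow (by positivity) (sq p)
  have hχ := periodic_pow_pow hgef hγ.pow_eq_one
  have hsum : ∑ n ∈ range (e * f), (β ^ p) ^ g ^ n = 1 := by
    rw [← hef, sum_range_pow_pow_eq_neg_one hgp hγ, CharTwo.neg_eq]
  obtain ⟨r, rfl⟩ := Nat.exists_eq_add_of_le' hr
  subst hf
  have hhalf : 2 ^ (r + 1) / 2 = 2 ^ r := by rw [pow_succ, Nat.mul_div_cancel _ two_pos]
  rw [sum_Hp_eq_classHalfSum hgef hef0 (hβ ▸ pow_orderOf_eq_one β),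
    two_mem_Dp_zero_iff hgef hef0 hk]
  refine mem_zero_one_iff_two_pow_dvd (periodic_classHalfSum hχ)
    (classHalfSum_sq (pow_pow_sq hk hγ.pow_eq_one)) (fun v => ?_) v
  rw [← hhalf, classHalfSum_add_classHalfSum_add_half hχ (dvd_pow_self 2 r.succ_ne_zero), hsum]

theorem stmt_12 (p e f r g : ℕ) (hp : p.Prime) (hodd : Odd p)
    (hr : 1 ≤ r) (hf : f = 2 ^ r) (hef : p - 1 = e * f)
    (hg : orderOf (g : ZMod (p ^ 2)) = p * (p - 1))
    {K : Type*} [Field K] (hK : CharP K 2) (β : K) (hβ : orderOf β = p ^ 2)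
    (v : ℕ) (hv : v < f) :
    (∑ t ∈ Hp p e f g v, β ^ t) ∈ ({0, 1} : Set K) ↔ 2 ∈ Dp p e f g 0 :=
  stmt_12_general p e f r g hp hr hf hef hg hK β hβ v
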